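/- arXiv:math/0306388 — 5 statements merged into one kernel-verified Lean document; each statement's English description precedes it below -/
import Mathlib

section
/- Let E = ℂ^{2d} and let U, V, W ⊆ E be d-dimensional subspaces that are pairwise transverse (U ∩ V = V ∩ W = U ∩ W = 0, so E = U ⊕ W). Let p_U and p_W denote the projections of E onto U and W along the decomposition E = U ⊕ W. Then for every pair (s, t) ∈ ℂ² with (s, t) ≠ (0, 0), the subspace f(s, t) := (s·p_U + t·p_W)(V) has dimension d. -/
open Module

/-- The projection of `E` onto `U` along `W` (for `E = U ⊕ W`), viewed as an
endomorphism of `E`. -/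
noncomputable def projAlong {E : Type*} [AddCommGroup E] [Module ℂ E]
    (U W : Submodule ℂ E) (h : IsCompl U W) : E →ₗ[ℂ] E :=
  U.subtype.comp (Submodule.linearProjOfIsCompl U W h)

/-- The pencil of subspaces `f(s,t) = (s·p_U + t·p_W)(V)`. -/
noncomputable def pencil {E : Type*} [AddCommGroup E] [Module ℂ E]
    (U V W : Submodule ℂ E) (h : IsCompl U W) (s t : ℂ) : Submodule ℂ E :=
  V.map (s • projAlong U W h + t • projAlong W U h.symm)

/-- For pairwise transverse `d`-dimensional subspaces `U, V, W` of `E = ℂ^{2d}`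
and `(s,t) ≠ (0,0)`, the subspace `f(s,t) = (s·p_U + t·p_W)(V)` has dimension `d`. -/
theorem stmt_2 {E : Type*} [AddCommGroup E] [Module ℂ E] [FiniteDimensional ℂ E]
    (d : ℕ) (hE : finrank ℂ E = 2 * d)
    (U V W : Submodule ℂ E)
    (hU : finrank ℂ U = d) (hV : finrank ℂ V = d) (hW : finrank ℂ W = d)
    (hUV : U ⊓ V = ⊥) (hVW : V ⊓ W = ⊥) (hUW : U ⊓ W = ⊥)
    (hc : IsCompl U W)
    (s t : ℂ) (hst : (s, t) ≠ (0, 0)) :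
    finrank ℂ (pencil U V W hc s t) = d := by
  set T : E →ₗ[ℂ] E := s • projAlong U W hc + t • projAlong W U hc.symm with hT
  have hrange : pencil U V W hc s t = LinearMap.range (T.comp V.subtype) := by
    rw [LinearMap.range_comp, Submodule.range_subtype]; rfl
  have hinj : Function.Injective (T.comp V.subtype) := by
    rw [← LinearMap.ker_eq_bot, LinearMap.ker_eq_bot']
    rintro ⟨v, hv⟩ h0
    have h0' : s • (projAlong U W hc v) + t • (projAlong W U hc.symm v) = 0 := by
      simpa [hT, LinearMap.add_apply, LinearMap.smul_apply] using h0
    set u : E := projAlong U W hc v with hu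
    set w : E := projAlong W U hc.symm v with hw
    have huU : u ∈ U := (Submodule.linearProjOfIsCompl U W hc v).2
    have hwW : w ∈ W := (Submodule.linearProjOfIsCompl W U hc.symm v).2
    have hsum : u + w = v := Submodule.projection_add_projection_eq_self hc v
    have hv0 : v = 0 := by
      rcases eq_or_ne s 0 with hs | hs
      · have ht : t ≠ 0 := by
          intro ht; exact hst (by simp [Prod.ext_iff, hs, ht])
        have hw0 : w = 0 := by
          have : t • w = 0 := by simpa [hs] using h0'
          exact (smul_eq_zero.mp this).resolve_left ht
        have : v ∈ U ⊓ V := ⟨by rw [← hsum, hw0, add_zero]; exact huU, hv⟩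
        simpa [hUV] using this
      · rcases eq_or_ne t 0 with ht | ht
        · have hu0 : u = 0 := by
            have : s • u = 0 := by simpa [ht] using h0'
            exact (smul_eq_zero.mp this).resolve_left hs
          have : v ∈ V ⊓ W := ⟨hv, by rw [← hsum, hu0, zero_add]; exact hwW⟩
          simpa [hVW] using this
        · have hmem : s • u ∈ U ⊓ W := by
            refine ⟨Submodule.smul_mem _ _ huU, ?_⟩
            have : s • u = -(t • w) := eq_neg_of_add_eq_zero_left h0'
            rw [this]; exact Submodule.neg_mem _ (Submodule.smul_mem _ _ hwW)
          have hu0 : u = 0 := by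
            have := hUW ▸ hmem
            have hsu : s • u = 0 := by simpa using this
            exact (smul_eq_zero.mp hsu).resolve_left hs
          have hw0 : w = 0 := by
            have : t • w = 0 := by simpa [hu0] using h0'
            exact (smul_eq_zero.mp this).resolve_left ht
          rw [← hsum, hu0, hw0, add_zero]
    exact Subtype.ext hv0
  rw [hrange, LinearMap.finrank_range_of_inj hinj, ← hV]
end

section
/- Let d ≥ 1, E = ℂ^{2d}, and let U, V, W ⊆ E be d-dimensional subspaces with U ∩ V = V ∩ W = U ∩ W = 0, with pencil f(s, t) = (s·p_U + t·p_W)(V). Then the intersection of all subspaces f(s, t) for (s, t) ≠ (0, 0) is the zero subspace, and their sum is all of E. -/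
/-!
The two degenerate members of the pencil are `f(1,0) = p_U(V)` and `f(0,1) = p_W(V)`.
Since `V` meets the kernel `W` of `p_U` trivially and `dim V = dim U`, the projection `p_U`
maps `V` onto `U`; likewise `f(0,1) = W`. Hence the intersection of the pencil lies in
`U ⊓ W = 0` and its sum contains `U ⊔ W = E`.
-/

open Module

theorem Submodule.finrank_map_eq_of_disjoint_ker {R M N : Type*} [Ring R] [AddCommGroup M]
    [Module R M] [AddCommGroup N] [Module R N] {f : M →ₗ[R] N} {p : Submodule R M}
    (h : Disjoint p (LinearMap.ker f)) : finrank R (p.map f) = finrank R p := by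
  rw [← LinearMap.range_domRestrict]
  exact LinearMap.finrank_range_of_inj (LinearMap.injective_domRestrict_iff.mpr h)

section projAlong

variable {E : Type*} [AddCommGroup E] [Module ℂ E] (U W : Submodule ℂ E) (h : IsCompl U W)

theorem ker_projAlong : LinearMap.ker (projAlong U W h) = W := by
  rw [projAlong, LinearMap.ker_comp, Submodule.ker_subtype, Submodule.comap_bot,
    Submodule.linearProjOfIsCompl, Submodule.ker_projectionOnto]

theorem range_projAlong : LinearMap.range (projAlong U W h) = U := by
  rw [projAlong, LinearMap.range_comp, Submodule.linearProjOfIsCompl,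
    Submodule.range_projectionOnto, Submodule.map_top, Submodule.range_subtype]

theorem map_projAlong_eq [FiniteDimensional ℂ E] {V : Submodule ℂ E} (hVW : Disjoint V W)
    (hrank : finrank ℂ U = finrank ℂ V) : V.map (projAlong U W h) = U := by
  refine Submodule.eq_of_le_of_finrank_le ?_ ?_
  · exact LinearMap.map_le_range.trans (range_projAlong U W h).le
  · rw [hrank, Submodule.finrank_map_eq_of_disjoint_ker (by rwa [ker_projAlong])]

end projAlong

section pencil

variable {E : Type*} [AddCommGroup E] [Module ℂ E] (U V W : Submodule ℂ E) (h : IsCompl U W)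

theorem pencil_one_zero : pencil U V W h 1 0 = V.map (projAlong U W h) := by
  simp [pencil]

theorem pencil_zero_one : pencil U V W h 0 1 = V.map (projAlong W U h.symm) := by
  simp [pencil]

end pencil

theorem stmt_6_general {E : Type*} [AddCommGroup E] [Module ℂ E] [FiniteDimensional ℂ E]
    (d : ℕ)
    (U V W : Submodule ℂ E)
    (hU : finrank ℂ U = d) (hV : finrank ℂ V = d) (hW : finrank ℂ W = d)
    (hUV : U ⊓ V = ⊥) (hVW : V ⊓ W = ⊥)
    (hc : IsCompl U W) :
    (⨅ p : {p : ℂ × ℂ // p ≠ (0, 0)}, pencil U V W hc p.1.1 p.1.2) = ⊥ ∧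
      (⨆ p : {p : ℂ × ℂ // p ≠ (0, 0)}, pencil U V W hc p.1.1 p.1.2) = ⊤ := by
  set F : {p : ℂ × ℂ // p ≠ (0, 0)} → Submodule ℂ E := fun p => pencil U V W hc p.1.1 p.1.2
  have hFU : F ⟨(1, 0), by simp⟩ = U := by
    rw [← map_projAlong_eq U W hc (disjoint_iff.mpr hVW) (hU.trans hV.symm)]
    exact pencil_one_zero U V W hc
  have hFW : F ⟨(0, 1), by simp⟩ = W := by
    rw [← map_projAlong_eq W U hc.symm (disjoint_iff.mpr hUV).symm (hW.trans hV.symm)]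
    exact pencil_zero_one U V W hc
  constructor
  · rw [eq_bot_iff, ← hc.inf_eq_bot, ← hFU, ← hFW]
    exact le_inf (iInf_le F _) (iInf_le F _)
  · rw [eq_top_iff, ← hc.sup_eq_top, ← hFU, ← hFW]
    exact sup_le (le_iSup F _) (le_iSup F _)

/-- The kernel of the pencil (the intersection of all the subspaces `f(s,t)` for
`(s,t) ≠ (0,0)`) is zero, and its span (the sum of all these subspaces) is all
of `E = ℂ^{2d}`. -/
theorem stmt_6 {E : Type*} [AddCommGroup E] [Module ℂ E] [FiniteDimensional ℂ E]
    (d : ℕ) (hd : 1 ≤ d) (hE : finrank ℂ E = 2 * d)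
    (U V W : Submodule ℂ E)
    (hU : finrank ℂ U = d) (hV : finrank ℂ V = d) (hW : finrank ℂ W = d)
    (hUV : U ⊓ V = ⊥) (hVW : V ⊓ W = ⊥) (hUW : U ⊓ W = ⊥)
    (hc : IsCompl U W) :
    (⨅ p : {p : ℂ × ℂ // p ≠ (0, 0)}, pencil U V W hc p.1.1 p.1.2) = ⊥ ∧
      (⨆ p : {p : ℂ × ℂ // p ≠ (0, 0)}, pencil U V W hc p.1.1 p.1.2) = ⊤ :=
  stmt_6_general d U V W hU hV hW hUV hVW hc
end

section
/- Let E = ℂ^{2d} be equipped with a nondegenerate alternating bilinear form ω, and let U, V, W ⊆ E be Lagrangian subspaces (i.e., maximal isotropic, of dimension d) with U ∩ V = V ∩ W = U ∩ W = 0. Then for every (s, t) ∈ ℂ² with (s, t) ≠ (0, 0), the subspace f(s, t) = (s·p_U + t·p_W)(V) is again Lagrangian. -/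
open Module

/-- If `U, V, W` are pairwise transverse Lagrangian subspaces of a symplectic
vector space `E = ℂ^{2d}`, then every member `f(s,t) = (s·p_U + t·p_W)(V)` of
the pencil, for `(s,t) ≠ (0,0)`, is again Lagrangian. -/
theorem stmt_8 {E : Type*} [AddCommGroup E] [Module ℂ E] [FiniteDimensional ℂ E]
    (d : ℕ) (hE : finrank ℂ E = 2 * d)
    (ω : LinearMap.BilinForm ℂ E) (halt : ∀ x, ω x x = 0) (hnd : ω.Nondegenerate)
    (U V W : Submodule ℂ E)
    (hU : finrank ℂ U = d) (hV : finrank ℂ V = d) (hW : finrank ℂ W = d)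
    (hUiso : ∀ x ∈ U, ∀ y ∈ U, ω x y = 0)
    (hViso : ∀ x ∈ V, ∀ y ∈ V, ω x y = 0)
    (hWiso : ∀ x ∈ W, ∀ y ∈ W, ω x y = 0)
    (hUV : U ⊓ V = ⊥) (hVW : V ⊓ W = ⊥) (hUW : U ⊓ W = ⊥)
    (hc : IsCompl U W)
    (s t : ℂ) (hst : (s, t) ≠ (0, 0)) :
    (∀ x ∈ pencil U V W hc s t, ∀ y ∈ pencil U V W hc s t, ω x y = 0) ∧
      finrank ℂ (pencil U V W hc s t) = d := by
  set P : E →ₗ[ℂ] E := s • projAlong U W hc + t • projAlong W U hc.symm with hP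
  have hmemU : ∀ x : E, projAlong U W hc x ∈ U :=
    fun x => (Submodule.linearProjOfIsCompl U W hc x).2
  have hmemW : ∀ x : E, projAlong W U hc.symm x ∈ W :=
    fun x => (Submodule.linearProjOfIsCompl W U hc.symm x).2
  have hsum : ∀ x : E, projAlong U W hc x + projAlong W U hc.symm x = x :=
    fun x => Submodule.projection_add_projection_eq_self hc x
  constructor
  · rintro x ⟨v₁, hv₁, rfl⟩ y ⟨v₂, hv₂, rfl⟩
    set u₁ := projAlong U W hc v₁
    set w₁ := projAlong W U hc.symm v₁
    set u₂ := projAlong U W hc v₂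
    set w₂ := projAlong W U hc.symm v₂
    have e1 : ω u₁ u₂ = 0 := hUiso _ (hmemU v₁) _ (hmemU v₂)
    have e2 : ω w₁ w₂ = 0 := hWiso _ (hmemW v₁) _ (hmemW v₂)
    have e3 : ω (u₁ + w₁) (u₂ + w₂) = 0 := by
      rw [hsum v₁, hsum v₂]; exact hViso _ hv₁ _ hv₂
    have hx : P v₁ = s • u₁ + t • w₁ := rfl
    have hy : P v₂ = s • u₂ + t • w₂ := rfl
    rw [hx, hy]
    simp only [map_add, map_smul, LinearMap.add_apply, LinearMap.smul_apply,
      smul_eq_mul] at e3 ⊢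
    linear_combination s * t * e3 + (s ^ 2 - s * t) * e1 + (t ^ 2 - s * t) * e2
  · have hinj : Function.Injective (P.comp V.subtype) := by
      rw [← LinearMap.ker_eq_bot, LinearMap.ker_eq_bot']
      rintro ⟨v, hv⟩ h0
      have h0' : s • projAlong U W hc v + t • projAlong W U hc.symm v = 0 := h0
      have hmem : s • projAlong U W hc v ∈ U ⊓ W := by
        refine ⟨Submodule.smul_mem _ _ (hmemU v), ?_⟩
        rw [eq_neg_of_add_eq_zero_left h0']
        exact Submodule.neg_mem _ (Submodule.smul_mem _ _ (hmemW v))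
      rw [hUW] at hmem
      have hsu : s • projAlong U W hc v = 0 := hmem
      have htw : t • projAlong W U hc.symm v = 0 := by
        rw [hsu, zero_add] at h0'; exact h0'
      ext
      by_cases hs : s = 0
      · have ht : t ≠ 0 := by
          intro ht; exact hst (by simp [hs, ht])
        have hw0 : projAlong W U hc.symm v = 0 := by
          have := smul_eq_zero.mp htw
          tauto
        have hvU : v ∈ U := by
          have := hsum v; rw [hw0, add_zero] at this; rw [← this]; exact hmemU v
        have : v ∈ U ⊓ V := ⟨hvU, hv⟩
        rw [hUV] at this
        simpa using this
      · have hu0 : projAlong U W hc v = 0 := by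
          have := smul_eq_zero.mp hsu
          tauto
        have hvW : v ∈ W := by
          have := hsum v; rw [hu0, zero_add] at this; rw [← this]; exact hmemW v
        have : v ∈ V ⊓ W := ⟨hv, hvW⟩
        rw [hVW] at this
        simpa using this
    have hrange : pencil U V W hc s t = LinearMap.range (P.comp V.subtype) := by
      rw [LinearMap.range_comp, Submodule.range_subtype]; rfl
    rw [hrange, LinearMap.finrank_range_of_inj hinj]
    exact hV
end

section
/- Let E = ℂ^{2e} be equipped with a nondegenerate symmetric bilinear form b, and let U, V, W ⊆ E be e-dimensional isotropic subspaces with U ∩ V = V ∩ W = U ∩ W = 0. Then for every (s, t) ∈ ℂ² with (s, t) ≠ (0, 0), the subspace f(s, t) = (s·p_U + t·p_W)(V) is again isotropic (of dimension e). -/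
open Module

/-- If `U, V, W` are pairwise transverse `e`-dimensional isotropic subspaces of
`E = ℂ^{2e}` equipped with a nondegenerate symmetric bilinear form `b`, then
every member `f(s,t) = (s·p_U + t·p_W)(V)` of the pencil, for `(s,t) ≠ (0,0)`,
is again isotropic of dimension `e`. -/
theorem stmt_9 {E : Type*} [AddCommGroup E] [Module ℂ E] [FiniteDimensional ℂ E]
    (e : ℕ) (hE : finrank ℂ E = 2 * e)
    (b : LinearMap.BilinForm ℂ E) (hsymm : ∀ x y, b x y = b y x) (hnd : b.Nondegenerate)
    (U V W : Submodule ℂ E)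
    (hU : finrank ℂ U = e) (hV : finrank ℂ V = e) (hW : finrank ℂ W = e)
    (hUiso : ∀ x ∈ U, ∀ y ∈ U, b x y = 0)
    (hViso : ∀ x ∈ V, ∀ y ∈ V, b x y = 0)
    (hWiso : ∀ x ∈ W, ∀ y ∈ W, b x y = 0)
    (hUV : U ⊓ V = ⊥) (hVW : V ⊓ W = ⊥) (hUW : U ⊓ W = ⊥)
    (hc : IsCompl U W)
    (s t : ℂ) (hst : (s, t) ≠ (0, 0)) :
    (∀ x ∈ pencil U V W hc s t, ∀ y ∈ pencil U V W hc s t, b x y = 0) ∧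
      finrank ℂ (pencil U V W hc s t) = e := by
  classical
  set pU := projAlong U W hc with hpU
  set pW := projAlong W U hc.symm with hpW
  have hpUmem : ∀ x, pU x ∈ U := fun x => (Submodule.linearProjOfIsCompl U W hc x).2
  have hpWmem : ∀ x, pW x ∈ W := fun x => (Submodule.linearProjOfIsCompl W U hc.symm x).2
  have hsum : ∀ x, pU x + pW x = x := fun x =>
    Submodule.projection_add_projection_eq_self hc x
  set f := s • pU + t • pW with hf
  constructor
  · rintro x hx y hy
    rcases hx with ⟨v, hv, rfl⟩
    rcases hy with ⟨v', hv', rfl⟩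
    have key : b (pU v) (pW v') + b (pW v) (pU v') = 0 := by
      have h0 : b v v' = 0 := hViso v hv v' hv'
      have := hsum v
      have h1 : b (pU v + pW v) (pU v' + pW v') = 0 := by rw [hsum v, hsum v']; exact h0
      have h2 : b (pU v) (pU v') = 0 := hUiso _ (hpUmem v) _ (hpUmem v')
      have h3 : b (pW v) (pW v') = 0 := hWiso _ (hpWmem v) _ (hpWmem v')
      simp only [map_add, LinearMap.add_apply, h2, h3] at h1
      linear_combination h1
    have h2 : b (pU v) (pU v') = 0 := hUiso _ (hpUmem v) _ (hpUmem v')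
    have h3 : b (pW v) (pW v') = 0 := hWiso _ (hpWmem v) _ (hpWmem v')
    simp only [hf, LinearMap.add_apply, LinearMap.smul_apply, map_add, map_smul,
      LinearMap.smul_apply, smul_eq_mul]
    linear_combination s * t * key + s * s * h2 + t * t * h3
  · have hinj : Function.Injective (f.comp V.subtype) := by
      rw [← LinearMap.ker_eq_bot, LinearMap.ker_eq_bot']
      rintro ⟨v, hv⟩ hfv
      have hfv' : s • pU v + t • pW v = 0 := by
        simpa [hf, LinearMap.comp_apply] using hfv
      have hm : s • pU v ∈ U ⊓ W := by
        constructor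
        · exact Submodule.smul_mem _ _ (hpUmem v)
        · have : s • pU v = -(t • pW v) := eq_neg_of_add_eq_zero_left hfv'
          rw [this]
          exact Submodule.neg_mem _ (Submodule.smul_mem _ _ (hpWmem v))
      rw [hUW, Submodule.mem_bot] at hm
      have hm' : t • pW v = 0 := by rwa [hm, zero_add] at hfv'
      have hst' : s ≠ 0 ∨ t ≠ 0 := by
        by_contra h
        push_neg at h
        exact hst (by simp [h.1, h.2] : (s, t) = (0, 0))
      have hv0 : v = 0 := by
        rcases hst' with hs | ht
        · have hU0 : pU v = 0 := by
            have := smul_eq_zero.mp hm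
            tauto
          have : v ∈ W := by rw [← hsum v, hU0, zero_add]; exact hpWmem v
          have : v ∈ V ⊓ W := ⟨hv, this⟩
          rwa [hVW, Submodule.mem_bot] at this
        · have hW0 : pW v = 0 := by
            have := smul_eq_zero.mp hm'
            tauto
          have : v ∈ U := by rw [← hsum v, hW0, add_zero]; exact hpUmem v
          have : v ∈ U ⊓ V := ⟨this, hv⟩
          rwa [hUV, Submodule.mem_bot] at this
      exact Subtype.ext hv0
    have : pencil U V W hc s t = LinearMap.range (f.comp V.subtype) := by
      rw [LinearMap.range_comp, Submodule.range_subtype]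
      rfl
    rw [this, LinearMap.finrank_range_of_inj hinj]
    exact hV
end

section
/- Fix integers 0 < d ≤ k ≤ n with k + d ≤ n, set r = n − k, and let λ = (λ_1 ≥ ⋯ ≥ λ_k ≥ 0) be a partition with λ_1 ≤ r. Let w_λ ∈ S_n be the Grassmannian permutation defined by w_λ(i) = λ_{k−i+1} + i for 1 ≤ i ≤ k and w_λ(i) < w_λ(i+1) for i > k, and let w_{λ,d} ∈ S_n be the permutation obtained from w_λ by sorting the values w_λ(k−d+1), …, w_λ(k+d) into increasing order. Then the number of inversions of w_{λ,d} satisfies inv(w_{λ,d}) ≥ |λ| − d², with equality if and only if λ_d ≥ d. -/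
open Finset

lemma card_pairs {n : ℕ} (P : Fin n → Fin n → Prop) [∀ i j, Decidable (P i j)] :
    (Finset.univ.filter fun p : Fin n × Fin n => P p.1 p.2).card
      = ∑ i, (Finset.univ.filter fun j => P i j).card := by
  rw [Finset.card_filter, ← Finset.univ_product_univ, Finset.sum_product]
  exact Finset.sum_congr rfl fun i _ => (Finset.card_filter _ _).symm

lemma card_coe_lt {n : ℕ} (c : ℕ) (hc : c ≤ n) :
    (Finset.univ.filter fun j : Fin n => (j:ℕ) < c).card = c := by
  rcases Nat.lt_or_ge c n with h | h
  · have he : (Finset.univ.filter fun j : Fin n => (j:ℕ) < c) = Finset.Iio ⟨c, h⟩ := by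
      ext j; simp [Fin.lt_def]
    rw [he, Fin.card_Iio]
  · have hcn : c = n := le_antisymm hc h
    have he : (Finset.univ.filter fun j : Fin n => (j:ℕ) < c) = Finset.univ := by
      ext j; simpa [hcn] using j.isLt
    rw [he, Finset.card_univ, Fintype.card_fin, hcn]

lemma card_lt_perm {n : ℕ} (w : Equiv.Perm (Fin n)) (v : Fin n) :
    (Finset.univ.filter fun j => w j < v).card = (v : ℕ) := by
  have h : Finset.image w (Finset.univ.filter fun j => w j < v)
      = Finset.univ.filter fun u : Fin n => (u:ℕ) < (v:ℕ) := by
    ext u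
    simp only [Finset.mem_image, Finset.mem_filter, Finset.mem_univ, true_and]
    constructor
    · rintro ⟨j, hj, rfl⟩; exact hj
    · intro hu; exact ⟨w.symm u, by rw [Equiv.apply_symm_apply]; exact Fin.lt_def.mpr hu, by simp⟩
  have := Finset.card_image_of_injective
    (Finset.univ.filter fun j => w j < v) w.injective
  have hv : (v:ℕ) ≤ n := le_of_lt v.isLt
  calc (Finset.univ.filter fun j => w j < v).card
      = (Finset.image w (Finset.univ.filter fun j => w j < v)).card := this.symm
    _ = (Finset.univ.filter fun u : Fin n => (u:ℕ) < (v:ℕ)).card := by rw [h]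
    _ = (v:ℕ) := card_coe_lt _ hv

lemma card_interval {n : ℕ} (a b : ℕ) (hb : b ≤ n) (hab : a ≤ b) :
    (Finset.univ.filter fun j : Fin n => a ≤ (j:ℕ) ∧ (j:ℕ) < b).card = b - a := by
  have hsub : (Finset.univ.filter fun j : Fin n => (j:ℕ) < a)
      ⊆ (Finset.univ.filter fun j : Fin n => (j:ℕ) < b) := by
    intro j hj; simp only [Finset.mem_filter, Finset.mem_univ, true_and] at *; omega
  have hsd : (Finset.univ.filter fun j : Fin n => a ≤ (j:ℕ) ∧ (j:ℕ) < b)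
      = (Finset.univ.filter fun j : Fin n => (j:ℕ) < b)
        \ (Finset.univ.filter fun j : Fin n => (j:ℕ) < a) := by
    ext j; simp only [Finset.mem_filter, Finset.mem_sdiff, Finset.mem_univ, true_and]; omega
  rw [hsd, Finset.card_sdiff_of_subset hsub, card_coe_lt b hb, card_coe_lt a (le_trans hab hb)]

lemma image_eq_of_eq_off {n : ℕ} (w w' : Equiv.Perm (Fin n)) (M : Finset (Fin n))
    (h : ∀ i ∉ M, w' i = w i) : M.image w' = M.image w := by
  have key : ∀ u : Fin n, w.symm u ∈ M ↔ w'.symm u ∈ M := by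
    intro u
    constructor
    · intro hm; by_contra hm'
      have h1 : w' (w'.symm u) = w (w'.symm u) := h _ hm'
      have h2 : w (w'.symm u) = u := by rw [← h1]; simp
      have h3 : w.symm u = w'.symm u := by
        apply w.injective; rw [h2]; simp
      rw [h3] at hm; exact hm' hm
    · intro hm; by_contra hm'
      have h1 : w' (w.symm u) = w (w.symm u) := h _ hm'
      have h2 : w' (w.symm u) = u := by rw [h1]; simp
      have h3 : w'.symm u = w.symm u := by
        apply w'.injective; rw [h2]; simp
      rw [h3] at hm; exact hm' hm
  ext u
  simp only [Finset.mem_image]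
  constructor
  · rintro ⟨i, hi, rfl⟩
    refine ⟨w.symm (w' i), ?_, by simp⟩
    rw [key]; simpa using hi
  · rintro ⟨i, hi, rfl⟩
    refine ⟨w'.symm (w i), ?_, by simp⟩
    rw [← key]; simpa using hi

lemma sum_reindex {n k : ℕ} (hk : 0 < k) (hkn : k ≤ n) (f : Fin k → ℕ) :
    ∑ i ∈ Finset.univ.filter (fun i : Fin n => (i:ℕ) < k), f ⟨k - 1 - (i:ℕ), by omega⟩
      = ∑ t, f t := by
  refine Finset.sum_bij' (fun (a : Fin n) _ => (⟨k - 1 - (a:ℕ), by omega⟩ : Fin k))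
    (fun (t : Fin k) _ => (⟨k - 1 - (t:ℕ), by omega⟩ : Fin n)) ?_ ?_ ?_ ?_ ?_
  · intro a _; exact Finset.mem_univ _
  · intro t _
    simp only [Finset.mem_filter, Finset.mem_univ, true_and]
    have := t.isLt
    omega
  · intro a ha
    simp only [Finset.mem_filter, Finset.mem_univ, true_and] at ha
    rw [Fin.ext_iff]
    simp only []
    omega
  · intro t _
    have := t.isLt
    rw [Fin.ext_iff]
    simp only []
    omega
  · intro a _; rfl

/-- The number of inversions of a permutation of `Fin n`. -/
def inversions {n : ℕ} (w : Equiv.Perm (Fin n)) : ℕ :=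
  (Finset.univ.filter fun p : Fin n × Fin n => p.1 < p.2 ∧ w p.2 < w p.1).card

/-- Let `0 < d ≤ k`, `k + d ≤ n`, `r = n - k`, and `λ` a partition in the `k × r`
rectangle.  Let `w` be the Grassmannian permutation `w_λ` (determined by
`w(i) = λ_{k-i+1} + i` for `i ≤ k` and increasing for `i > k`, here in 0-based
indexing), and let `w'` be the permutation `w_{λ,d}` obtained from `w` by
sorting the values at positions `k-d+1, …, k+d` (1-based) into increasing
order.  Then `inv(w') ≥ |λ| - d²`, with equality iff `λ_d ≥ d`. -/
theorem stmt_13 (n k d : ℕ) (hd : 0 < d) (hdk : d ≤ k) (hkd : k + d ≤ n)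
    (lam : Fin k → ℕ) (hanti : Antitone lam)
    (hbound : lam ⟨0, by omega⟩ ≤ n - k)
    (w : Equiv.Perm (Fin n))
    (hw1 : ∀ i : Fin n, ∀ hi : (i : ℕ) < k,
      ((w i : ℕ)) = lam ⟨k - 1 - (i : ℕ), by omega⟩ + (i : ℕ))
    (hw2 : ∀ i j : Fin n, k ≤ (i : ℕ) → i < j → w i < w j)
    (w' : Equiv.Perm (Fin n))
    (hw'1 : ∀ i : Fin n, ((i : ℕ) < k - d ∨ k + d ≤ (i : ℕ)) → w' i = w i)
    (hw'2 : ∀ i j : Fin n, k - d ≤ (i : ℕ) → i < j → (j : ℕ) < k + d → w' i < w' j) :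
    ((∑ i, lam i : ℕ) : ℤ) - (d : ℤ) ^ 2 ≤ (inversions w' : ℤ) ∧
      ((inversions w' : ℤ) = ((∑ i, lam i : ℕ) : ℤ) - (d : ℤ) ^ 2 ↔
        d ≤ lam ⟨d - 1, by omega⟩) := by
  have hk0 : 0 < k := lt_of_lt_of_le hd hdk
  -- every part of lam is at most n - k
  have hlam_le : ∀ t : Fin k, lam t ≤ n - k := by
    intro t
    exact le_trans (hanti (show (⟨0, hk0⟩ : Fin k) ≤ t from Fin.mk_le_mk.mpr (Nat.zero_le _)))
      hbound
  -- w is strictly increasing on the first block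
  have mono1 : ∀ i j : Fin n, (j:ℕ) < k → i < j → w i < w j := by
    intro i j hjk hij
    have hij' : (i:ℕ) < (j:ℕ) := hij
    have hik : (i:ℕ) < k := lt_trans hij' hjk
    have e1 := hw1 i hik
    have e2 := hw1 j hjk
    have hle : lam ⟨k - 1 - (i:ℕ), by omega⟩ ≤ lam ⟨k - 1 - (j:ℕ), by omega⟩ := by
      apply hanti
      exact Fin.mk_le_mk.mpr (by omega)
    exact Fin.lt_def.mpr (by omega)
  -- weak monotonicity of w on the tail
  have mono2 : ∀ i j : Fin n, k ≤ (i:ℕ) → (i:ℕ) ≤ (j:ℕ) → (w i : ℕ) ≤ (w j : ℕ) := by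
    intro i j hki hij
    rcases Nat.lt_or_ge (i:ℕ) (j:ℕ) with h | h
    · exact le_of_lt (hw2 i j hki (Fin.lt_def.mpr h))
    · have : i = j := Fin.ext (le_antisymm hij h)
      rw [this]
  -- row counts
  set R : Fin n → ℕ :=
    fun i => (Finset.univ.filter fun j => i < j ∧ w' j < w' i).card with hR
  have hinv : inversions w' = ∑ i, R i := by
    rw [hR]; exact card_pairs fun i j => i < j ∧ w' j < w' i
  -- the auxiliary counting functions
  set g : Fin n → ℕ :=
    fun v => (Finset.univ.filter fun j : Fin n => k + d ≤ (j:ℕ) ∧ w j < v).card with hg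
  set m : Fin n → ℕ :=
    fun i => (Finset.univ.filter fun j : Fin n =>
      k ≤ (j:ℕ) ∧ (j:ℕ) < k + d ∧ w j < w i).card with hm
  -- rows past the window vanish
  have hR3 : ∀ i : Fin n, k + d ≤ (i:ℕ) → R i = 0 := by
    intro i hi
    simp only [hR]
    rw [Finset.card_eq_zero, Finset.filter_eq_empty_iff]
    rintro j - ⟨hij, hji⟩
    have hj : k + d ≤ (j:ℕ) := le_trans hi (le_of_lt hij)
    rw [hw'1 i (Or.inr hi), hw'1 j (Or.inr hj)] at hji
    exact absurd (hw2 i j (by omega) hij) (lt_asymm hji)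
  -- rows before the window
  have hR1 : ∀ i : Fin n, (i:ℕ) < k - d → R i = (w i : ℕ) - (i:ℕ) := by
    intro i hi
    have hwi : w' i = w i := hw'1 i (Or.inl hi)
    have hset : (Finset.univ.filter fun j => i < j ∧ w' j < w' i)
        = (Finset.univ.filter fun j => w' j < w' i)
          \ (Finset.univ.filter fun j : Fin n => (j:ℕ) < (i:ℕ)) := by
      ext j
      simp only [Finset.mem_filter, Finset.mem_sdiff, Finset.mem_univ, true_and]
      constructor
      · rintro ⟨h1, h2⟩
        exact ⟨h2, by have := Fin.lt_def.mp h1; omega⟩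
      · rintro ⟨h1, h2⟩
        refine ⟨?_, h1⟩
        rcases Nat.lt_or_ge (i:ℕ) (j:ℕ) with h | h
        · exact Fin.lt_def.mpr h
        · have : i = j := Fin.ext (by omega)
          rw [this] at h1; exact absurd h1 (lt_irrefl _)
    have hsub : (Finset.univ.filter fun j : Fin n => (j:ℕ) < (i:ℕ))
        ⊆ (Finset.univ.filter fun j => w' j < w' i) := by
      intro j hj
      simp only [Finset.mem_filter, Finset.mem_univ, true_and] at *
      have hji : j < i := Fin.lt_def.mpr hj
      have hjlt : (j:ℕ) < k - d := by omega
      rw [hwi, hw'1 j (Or.inl hjlt)]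
      exact mono1 j i (by omega) hji
    simp only [hR]
    rw [hset, Finset.card_sdiff_of_subset hsub, card_lt_perm w' (w' i),
      card_coe_lt _ (le_of_lt i.isLt), hwi]
  -- rows inside the window
  have hRM : ∀ i : Fin n, k - d ≤ (i:ℕ) → (i:ℕ) < k + d → R i = g (w' i) := by
    intro i h1 h2
    simp only [hR, hg]
    congr 1
    ext j
    simp only [Finset.mem_filter, Finset.mem_univ, true_and]
    constructor
    · rintro ⟨hij, hji⟩
      have hjkd : k + d ≤ (j:ℕ) := by
        by_contra hcon
        exact absurd (hw'2 i j h1 hij (by omega)) (lt_asymm hji)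
      rw [hw'1 j (Or.inr hjkd)] at hji
      exact ⟨hjkd, hji⟩
    · rintro ⟨hjkd, hji⟩
      have hij : i < j := Fin.lt_def.mpr (by omega)
      rw [hw'1 j (Or.inr hjkd)]
      exact ⟨hij, hji⟩
  -- the partition identity for positions in the first block
  have key1 : ∀ i : Fin n, (i:ℕ) < k → (w i : ℕ) = (i:ℕ) + m i + g (w i) := by
    intro i hik
    have hpart : (Finset.univ.filter fun j => w j < w i)
        = ((Finset.univ.filter fun j : Fin n => (j:ℕ) < k ∧ w j < w i)
            ∪ (Finset.univ.filter fun j : Fin n =>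
                k ≤ (j:ℕ) ∧ (j:ℕ) < k + d ∧ w j < w i))
          ∪ (Finset.univ.filter fun j : Fin n => k + d ≤ (j:ℕ) ∧ w j < w i) := by
      ext j
      simp only [Finset.mem_filter, Finset.mem_union, Finset.mem_univ, true_and]
      constructor
      · intro hP
        by_cases h1 : (j:ℕ) < k
        · exact Or.inl (Or.inl ⟨h1, hP⟩)
        · by_cases h2 : (j:ℕ) < k + d
          · exact Or.inl (Or.inr ⟨by omega, h2, hP⟩)
          · exact Or.inr ⟨by omega, hP⟩
      · rintro ((⟨-, h⟩ | ⟨-, -, h⟩) | ⟨-, h⟩) <;> exact h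
    have hd1 : Disjoint
        ((Finset.univ.filter fun j : Fin n => (j:ℕ) < k ∧ w j < w i)
          ∪ (Finset.univ.filter fun j : Fin n =>
              k ≤ (j:ℕ) ∧ (j:ℕ) < k + d ∧ w j < w i))
        (Finset.univ.filter fun j : Fin n => k + d ≤ (j:ℕ) ∧ w j < w i) := by
      rw [Finset.disjoint_left]
      intro j hj hj'
      simp only [Finset.mem_filter, Finset.mem_union, Finset.mem_univ, true_and] at hj hj'
      omega
    have hd2 : Disjoint
        (Finset.univ.filter fun j : Fin n => (j:ℕ) < k ∧ w j < w i)
        (Finset.univ.filter fun j : Fin n =>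
          k ≤ (j:ℕ) ∧ (j:ℕ) < k + d ∧ w j < w i) := by
      rw [Finset.disjoint_left]
      intro j hj hj'
      simp only [Finset.mem_filter, Finset.mem_univ, true_and] at hj hj'
      omega
    have hF1 : (Finset.univ.filter fun j : Fin n => (j:ℕ) < k ∧ w j < w i)
        = (Finset.univ.filter fun j : Fin n => (j:ℕ) < (i:ℕ)) := by
      ext j
      simp only [Finset.mem_filter, Finset.mem_univ, true_and]
      constructor
      · rintro ⟨hjk, hwj⟩
        by_contra hcon
        rcases Nat.lt_or_ge (i:ℕ) (j:ℕ) with h | h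
        · exact absurd (mono1 i j hjk (Fin.lt_def.mpr h)) (lt_asymm hwj)
        · have : i = j := Fin.ext (by omega)
          rw [this] at hwj; exact absurd hwj (lt_irrefl _)
      · intro hji
        exact ⟨by omega, mono1 j i hik (Fin.lt_def.mpr hji)⟩
    have hcard := congrArg Finset.card hpart
    rw [Finset.card_union_of_disjoint hd1, Finset.card_union_of_disjoint hd2,
      card_lt_perm w (w i), hF1, card_coe_lt _ (le_of_lt i.isLt)] at hcard
    simp only [hm, hg]
    omega
  -- g vanishes on the right half of the window
  have hg0 : ∀ i : Fin n, k ≤ (i:ℕ) → (i:ℕ) < k + d → g (w i) = 0 := by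
    intro i h1 h2
    simp only [hg]
    rw [Finset.card_eq_zero, Finset.filter_eq_empty_iff]
    rintro j - ⟨hj, hji⟩
    exact absurd (hw2 i j h1 (Fin.lt_def.mpr (by omega))) (lt_asymm hji)
  -- m is at most d
  have hm_le_d : ∀ i : Fin n, m i ≤ d := by
    intro i
    simp only [hm]
    have hsub : (Finset.univ.filter fun j : Fin n =>
        k ≤ (j:ℕ) ∧ (j:ℕ) < k + d ∧ w j < w i)
        ⊆ (Finset.univ.filter fun j : Fin n => k ≤ (j:ℕ) ∧ (j:ℕ) < k + d) := by
      intro j hj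
      simp only [Finset.mem_filter, Finset.mem_univ, true_and] at *
      exact ⟨hj.1, hj.2.1⟩
    have := Finset.card_le_card hsub
    rw [card_interval k (k+d) hkd (by omega)] at this
    omega
  -- m equals min (lam) d on the left half of the window
  have hm_eq : ∀ i : Fin n, ∀ h1 : k - d ≤ (i:ℕ), ∀ h2 : (i:ℕ) < k,
      m i = min (lam ⟨k - 1 - (i:ℕ), by omega⟩) d := by
    intro i h1 h2
    set a : ℕ := lam ⟨k - 1 - (i:ℕ), by omega⟩ with ha
    have han : a ≤ n - k := hlam_le _
    have hwa : (w i : ℕ) = a + (i:ℕ) := hw1 i h2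
    -- the set of tail positions with small value is an initial interval
    have hA : (Finset.univ.filter fun j : Fin n => k ≤ (j:ℕ) ∧ w j < w i)
        = (Finset.univ.filter fun j : Fin n => k ≤ (j:ℕ) ∧ (j:ℕ) < k + a) := by
      -- first, its cardinality is a
      have hcardA : (Finset.univ.filter fun j : Fin n => k ≤ (j:ℕ) ∧ w j < w i).card = a := by
        have hpart : (Finset.univ.filter fun j => w j < w i)
            = (Finset.univ.filter fun j : Fin n => (j:ℕ) < (i:ℕ))
              ∪ (Finset.univ.filter fun j : Fin n => k ≤ (j:ℕ) ∧ w j < w i) := by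
          ext j
          simp only [Finset.mem_filter, Finset.mem_union, Finset.mem_univ, true_and]
          constructor
          · intro hP
            by_cases hjk : (j:ℕ) < k
            · left
              by_contra hcon
              rcases Nat.lt_or_ge (i:ℕ) (j:ℕ) with h | h
              · exact absurd (mono1 i j hjk (Fin.lt_def.mpr h)) (lt_asymm hP)
              · have : i = j := Fin.ext (by omega)
                rw [this] at hP; exact absurd hP (lt_irrefl _)
            · exact Or.inr ⟨by omega, hP⟩
          · rintro (hj | ⟨-, hj⟩)
            · exact mono1 j i h2 (Fin.lt_def.mpr hj)
            · exact hj
        have hdisj : Disjoint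
            (Finset.univ.filter fun j : Fin n => (j:ℕ) < (i:ℕ))
            (Finset.univ.filter fun j : Fin n => k ≤ (j:ℕ) ∧ w j < w i) := by
          rw [Finset.disjoint_left]
          intro j hj hj'
          simp only [Finset.mem_filter, Finset.mem_univ, true_and] at hj hj'
          omega
        have hcard := congrArg Finset.card hpart
        rw [Finset.card_union_of_disjoint hdisj, card_lt_perm w (w i),
          card_coe_lt _ (le_of_lt i.isLt)] at hcard
        omega
      ext j
      simp only [Finset.mem_filter, Finset.mem_univ, true_and]
      constructor
      · rintro ⟨hkj, hji⟩
        refine ⟨hkj, ?_⟩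
        by_contra hcon
        -- then [k, j] is contained in the set, giving too large a cardinality
        have hsub : (Finset.univ.filter fun j' : Fin n => k ≤ (j':ℕ) ∧ (j':ℕ) < (j:ℕ) + 1)
            ⊆ (Finset.univ.filter fun j' : Fin n => k ≤ (j':ℕ) ∧ w j' < w i) := by
          intro j' hj'
          simp only [Finset.mem_filter, Finset.mem_univ, true_and] at *
          refine ⟨hj'.1, ?_⟩
          have := mono2 j' j hj'.1 (by omega)
          exact Fin.lt_def.mpr (by omega)
        have := Finset.card_le_card hsub
        rw [hcardA, card_interval k ((j:ℕ)+1) (by omega) (by omega)] at this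
        omega
      · rintro ⟨hkj, hja⟩
        refine ⟨hkj, ?_⟩
        by_contra hcon
        have hwij : (w i : ℕ) ≤ (w j : ℕ) := by
          rw [Fin.lt_def] at hcon; omega
        have hsub : (Finset.univ.filter fun j' : Fin n => k ≤ (j':ℕ) ∧ w j' < w i)
            ⊆ (Finset.univ.filter fun j' : Fin n => k ≤ (j':ℕ) ∧ (j':ℕ) < (j:ℕ)) := by
          intro j' hj'
          simp only [Finset.mem_filter, Finset.mem_univ, true_and] at *
          refine ⟨hj'.1, ?_⟩
          by_contra hcon'
          have := mono2 j j' hkj (by omega)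
          have hj'lt : (w j' : ℕ) < (w i : ℕ) := hj'.2
          omega
        have := Finset.card_le_card hsub
        rw [hcardA, card_interval k (j:ℕ) (by omega) (by omega)] at this
        omega
    -- now compute m
    have hmm : (Finset.univ.filter fun j : Fin n =>
        k ≤ (j:ℕ) ∧ (j:ℕ) < k + d ∧ w j < w i)
        = (Finset.univ.filter fun j : Fin n => k ≤ (j:ℕ) ∧ (j:ℕ) < k + min a d) := by
      ext j
      have hj1 : j ∈ (Finset.univ.filter fun j : Fin n => k ≤ (j:ℕ) ∧ w j < w i)
          ↔ j ∈ (Finset.univ.filter fun j : Fin n => k ≤ (j:ℕ) ∧ (j:ℕ) < k + a) := by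
        rw [hA]
      simp only [Finset.mem_filter, Finset.mem_univ, true_and] at hj1 ⊢
      constructor
      · rintro ⟨hkj, hjd, hji⟩
        have := hj1.mp ⟨hkj, hji⟩
        exact ⟨hkj, by omega⟩
      · rintro ⟨hkj, hjm⟩
        have := hj1.mpr ⟨hkj, by omega⟩
        exact ⟨hkj, by omega, this.2⟩
    simp only [hm]
    rw [hmm, card_interval k (k + min a d) (by omega) (by omega)]
    omega
  -- now assemble the sums
  have hL : (Finset.univ : Finset (Fin n))
      = (Finset.univ.filter fun i : Fin n => (i:ℕ) < k - d)
        ∪ ((Finset.univ.filter fun i : Fin n => k - d ≤ (i:ℕ) ∧ (i:ℕ) < k)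
        ∪ ((Finset.univ.filter fun i : Fin n => k ≤ (i:ℕ) ∧ (i:ℕ) < k + d)
        ∪ (Finset.univ.filter fun i : Fin n => k + d ≤ (i:ℕ)))) := by
    ext i
    simp only [Finset.mem_filter, Finset.mem_union, Finset.mem_univ, true_and, iff_true,
      true_iff]
    omega
  set L : Finset (Fin n) := Finset.univ.filter fun i : Fin n => (i:ℕ) < k - d with hLdef
  set WL : Finset (Fin n) :=
    Finset.univ.filter (fun i : Fin n => k - d ≤ (i:ℕ) ∧ (i:ℕ) < k) with hWLdef
  set WR : Finset (Fin n) :=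
    Finset.univ.filter (fun i : Fin n => k ≤ (i:ℕ) ∧ (i:ℕ) < k + d) with hWRdef
  set Rt : Finset (Fin n) :=
    Finset.univ.filter (fun i : Fin n => k + d ≤ (i:ℕ)) with hRtdef
  set W : Finset (Fin n) :=
    Finset.univ.filter (fun i : Fin n => k - d ≤ (i:ℕ) ∧ (i:ℕ) < k + d) with hWdef
  have hWun : W = WL ∪ WR := by
    simp only [hWdef, hWLdef, hWRdef]
    ext i
    simp only [Finset.mem_filter, Finset.mem_union, Finset.mem_univ, true_and]
    omega
  have hdislist : Disjoint WL WR ∧ Disjoint L (WL ∪ (WR ∪ Rt)) ∧ Disjoint WL (WR ∪ Rt)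
      ∧ Disjoint WR Rt := by
    refine ⟨?_, ?_, ?_, ?_⟩ <;>
    · rw [Finset.disjoint_left]
      intro j hj hj'
      simp only [hLdef, hWLdef, hWRdef, hRtdef, Finset.mem_filter, Finset.mem_union,
        Finset.mem_univ, true_and] at hj hj'
      omega
  obtain ⟨dis0, dis1, dis2, dis3⟩ := hdislist
  -- split the total sum
  have hsplit : ∑ i, R i = (∑ i ∈ L, R i + (∑ i ∈ WL, R i + (∑ i ∈ WR, R i
      + ∑ i ∈ Rt, R i))) := by
    conv_lhs => rw [show (Finset.univ : Finset (Fin n)) = L ∪ (WL ∪ (WR ∪ Rt)) from hL]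
    rw [Finset.sum_union dis1, Finset.sum_union dis2, Finset.sum_union dis3]
  have hRt0 : ∑ i ∈ Rt, R i = 0 := by
    apply Finset.sum_eq_zero
    intro i hi
    simp only [hRtdef, Finset.mem_filter, Finset.mem_univ, true_and] at hi
    exact hR3 i hi
  have hLsum : ∑ i ∈ L, R i = ∑ i ∈ L, ((w i : ℕ) - (i:ℕ)) := by
    apply Finset.sum_congr rfl
    intro i hi
    simp only [hLdef, Finset.mem_filter, Finset.mem_univ, true_and] at hi
    exact hR1 i hi
  -- the window sum
  have hWsum1 : ∑ i ∈ WL, R i + ∑ i ∈ WR, R i = ∑ i ∈ W, g (w' i) := by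
    rw [← Finset.sum_union dis0, ← hWun]
    apply Finset.sum_congr rfl
    intro i hi
    simp only [hWdef, Finset.mem_filter, Finset.mem_univ, true_and] at hi
    exact hRM i hi.1 hi.2
  have hoff : ∀ i ∉ W, w' i = w i := by
    intro i hi
    simp only [hWdef, Finset.mem_filter, Finset.mem_univ, true_and] at hi
    exact hw'1 i (by omega)
  have hWsum2 : ∑ i ∈ W, g (w' i) = ∑ i ∈ W, g (w i) := by
    have hinj' : ∀ x ∈ W, ∀ y ∈ W, w' x = w' y → x = y :=
      fun x _ y _ h => w'.injective h
    have hinj : ∀ x ∈ W, ∀ y ∈ W, w x = w y → x = y :=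
      fun x _ y _ h => w.injective h
    rw [← Finset.sum_image hinj', image_eq_of_eq_off w w' W hoff, Finset.sum_image hinj]
  have hWsum3 : ∑ i ∈ W, g (w i) = ∑ i ∈ WL, g (w i) := by
    rw [hWun, Finset.sum_union dis0]
    have : ∑ i ∈ WR, g (w i) = 0 := by
      apply Finset.sum_eq_zero
      intro i hi
      simp only [hWRdef, Finset.mem_filter, Finset.mem_univ, true_and] at hi
      exact hg0 i hi.1 hi.2
    omega
  -- key identity E2
  have hE2 : ∑ i ∈ WL, g (w i) + ∑ i ∈ WL, m i = ∑ i ∈ WL, ((w i : ℕ) - (i:ℕ)) := by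
    rw [← Finset.sum_add_distrib]
    apply Finset.sum_congr rfl
    intro i hi
    simp only [hWLdef, Finset.mem_filter, Finset.mem_univ, true_and] at hi
    have := key1 i hi.2
    omega
  -- reindexing E3
  have hLW : L ∪ WL = Finset.univ.filter fun i : Fin n => (i:ℕ) < k := by
    simp only [hLdef, hWLdef]
    ext i
    simp only [Finset.mem_filter, Finset.mem_union, Finset.mem_univ, true_and]
    omega
  have hdisLWL : Disjoint L WL := by
    rw [Finset.disjoint_left]
    intro j hj hj'
    simp only [hLdef, hWLdef, Finset.mem_filter, Finset.mem_univ, true_and] at hj hj'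
    omega
  have hE3 : ∑ i ∈ L, ((w i : ℕ) - (i:ℕ)) + ∑ i ∈ WL, ((w i : ℕ) - (i:ℕ))
      = ∑ t, lam t := by
    rw [← Finset.sum_union hdisLWL, hLW]
    have hcong : ∀ i ∈ Finset.univ.filter (fun i : Fin n => (i:ℕ) < k),
        ((w i : ℕ) - (i:ℕ)) = lam ⟨k - 1 - (i:ℕ), by omega⟩ := by
      intro i hi
      simp only [Finset.mem_filter, Finset.mem_univ, true_and] at hi
      have := hw1 i hi
      omega
    rw [Finset.sum_congr rfl hcong]
    exact sum_reindex hk0 (by omega) lam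
  -- the total identity
  have hkey : inversions w' + ∑ i ∈ WL, m i = ∑ t, lam t := by
    rw [hinv, hsplit, hRt0, hLsum]
    omega
  -- cardinality of WL
  have hcardWL : WL.card = d := by
    rw [hWLdef, card_interval (k - d) k (by omega) (by omega)]
    omega
  -- the sum of m is at most d^2
  have hS_le : ∑ i ∈ WL, m i ≤ d * d := by
    have := Finset.sum_le_card_nsmul WL m d (fun i _ => hm_le_d i)
    rwa [hcardWL, smul_eq_mul] at this
  -- equality condition
  have hS_iff : ∑ i ∈ WL, m i = d * d ↔ d ≤ lam ⟨d - 1, by omega⟩ := by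
    constructor
    · intro hS
      by_contra hcon
      push_neg at hcon
      have hi0n : k - d < n := by omega
      set i0 : Fin n := ⟨k - d, hi0n⟩ with hi0
      have hi0mem : i0 ∈ WL := by
        simp only [hWLdef, hi0, Finset.mem_filter, Finset.mem_univ, true_and]
        omega
      have hmi0 : m i0 < d := by
        have := hm_eq i0 (by simp [hi0]) (by simp [hi0]; omega)
        have hfe : (⟨k - 1 - (i0:ℕ), by omega⟩ : Fin k) = ⟨d - 1, by omega⟩ := by
          apply Fin.ext
          simp only [hi0]
          omega
        rw [hfe] at this
        omega
      have hlt : ∑ i ∈ WL, m i < ∑ _i ∈ WL, d := by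
        apply Finset.sum_lt_sum (fun i _ => hm_le_d i) ⟨i0, hi0mem, hmi0⟩
      rw [Finset.sum_const, hcardWL, smul_eq_mul] at hlt
      omega
    · intro hlam
      have hall : ∀ i ∈ WL, m i = d := by
        intro i hi
        simp only [hWLdef, Finset.mem_filter, Finset.mem_univ, true_and] at hi
        have := hm_eq i hi.1 hi.2
        have hle : lam ⟨d - 1, by omega⟩ ≤ lam ⟨k - 1 - (i:ℕ), by omega⟩ := by
          apply hanti
          exact Fin.mk_le_mk.mpr (by omega)
        omega
      rw [Finset.sum_congr rfl hall, Finset.sum_const, hcardWL, smul_eq_mul]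
  -- conclude
  have hpow : ((d : ℤ))^2 = ((d * d : ℕ) : ℤ) := by push_cast; ring
  have hkey' : (inversions w' : ℤ) + ((∑ i ∈ WL, m i : ℕ) : ℤ) = ((∑ t, lam t : ℕ) : ℤ) := by
    exact_mod_cast congrArg (fun x : ℕ => (x : ℤ)) hkey
  constructor
  · rw [hpow]
    have : ((∑ i ∈ WL, m i : ℕ) : ℤ) ≤ ((d * d : ℕ) : ℤ) := by exact_mod_cast hS_le
    omega
  · rw [hpow]
    constructor
    · intro h
      apply hS_iff.mp
      omega
    · intro h
      have := hS_iff.mpr h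
      omega
end
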